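/- Let q ≥ 4 be even. The infinite λ_q-continued fraction [1; (1)^{h_q−1}, 2, (1)^{h_q−1}, 2, …] (a_0 = 1 followed by the periodic repetition of the block consisting of h_q−1 entries 1 and one entry 2) is regular and converges to the value 1. -/

import Mathlib

/-
Write `q = 2h + 2`, `φ = π / (2q)`, so that `λ_q = 2 cos 2φ`, and let `e_n = p_{n-1} - q_{n-1}`.
The errors `e_n` obey the same three-term recurrence as the convergents. Along a run of digits
`1` this is the Chebyshev recurrence, solved by `e_n = cos ((2n+1)φ) / cos φ > 0`; the digit `2`
closing each block makes `e_{n+h} = tan φ · e_n` with `0 < tan φ < 1`. So the errors are positive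
and decay geometrically, and the determinant identity `p_{n+1} q_n - p_n q_{n+1} = -1` then forces
`q_n > 0` and `p_n / q_n → 1`. Regularity holds because every `h` consecutive digits contain a `2`,
while every forbidden block for even `q` starts with `h` entries `±1`.
-/

open Filter Topology

/-- `λ_q = 2 cos (π/q)`. -/
noncomputable def lamq (q : ℕ) : ℝ := 2 * Real.cos (Real.pi / q)

/-- `h_q = (q-2)/2` for even `q` and `(q-3)/2` for odd `q`. -/
def hQ (q : ℕ) : ℕ := if Even q then (q - 2) / 2 else (q - 3) / 2

/-- Forbidden blocks for the nearest `λ_q`-multiple continued fractions.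
For `ε ∈ {1,-1}`: the block `(ε)^{h_q+1}`; for even `q` the blocks `((ε)^{h_q}, ε·m)`, `m ≥ 1`;
for odd `q` (including `q = 3`, where `h_q = 0`) the blocks `((ε)^{h_q}, ε·2, (ε)^{h_q}, ε·m)`,
`m ≥ 1`. -/
def IsForbidden (q : ℕ) (L : List ℤ) : Prop :=
  ∃ ε : ℤ, (ε = 1 ∨ ε = -1) ∧
    (L = List.replicate (hQ q + 1) ε ∨
      (if Even q then
        ∃ m : ℤ, 1 ≤ m ∧ L = List.replicate (hQ q) ε ++ [ε * m]
      else
        ∃ m : ℤ, 1 ≤ m ∧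
          L = List.replicate (hQ q) ε ++ ε * 2 :: (List.replicate (hQ q) ε ++ [ε * m])))

/-- An infinite sequence is `q`-regular if no finite subblock is forbidden. -/
def RegularSeq (q : ℕ) (a : ℕ → ℤ) : Prop :=
  ∀ (l len : ℕ), ¬ IsForbidden q (List.ofFn fun j : Fin len => a (l + (j : ℕ)))

/-- An infinite sequence is dual `q`-regular if no reversed finite subblock is forbidden. -/
def DualRegularSeq (q : ℕ) (a : ℕ → ℤ) : Prop :=
  ∀ (l len : ℕ), ¬ IsForbidden q (List.ofFn fun j : Fin len => a (l + (j : ℕ))).reverse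

/-- A finite sequence is `q`-regular if no contiguous subblock is forbidden. -/
def RegularList (q : ℕ) (L : List ℤ) : Prop :=
  ∀ B : List ℤ, B <:+: L → ¬ IsForbidden q B

/-- Numerators of the convergents: `p₀ = a₀λ`, `p₁ = a₁λ·p₀ - 1`,
`pₙ = aₙλ·pₙ₋₁ - pₙ₋₂` (so that `p₋₁ = 1`, `p₋₂ = 0`).  Here `A n` is the digit `aₙ`. -/
noncomputable def cfP (lam : ℝ) (A : ℕ → ℤ) : ℕ → ℝ
  | 0 => (A 0 : ℝ) * lam
  | 1 => (A 1 : ℝ) * lam * ((A 0 : ℝ) * lam) - 1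
  | (n + 2) => (A (n + 2) : ℝ) * lam * cfP lam A (n + 1) - cfP lam A n

/-- Denominators of the convergents: `q₀ = 1`, `q₁ = a₁λ`,
`qₙ = aₙλ·qₙ₋₁ - qₙ₋₂` (so that `q₋₁ = 0`, `q₋₂ = -1`). -/
noncomputable def cfQ (lam : ℝ) (A : ℕ → ℤ) : ℕ → ℝ
  | 0 => 1
  | 1 => (A 1 : ℝ) * lam
  | (n + 2) => (A (n + 2) : ℝ) * lam * cfQ lam A (n + 1) - cfQ lam A n

/-- The λ-continued fraction with digit sequence `A` converges to `x`. -/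
def CFConvergesTo (lam : ℝ) (A : ℕ → ℤ) (x : ℝ) : Prop :=
  (∀ n, cfQ lam A n ≠ 0) ∧
    Filter.Tendsto (fun n => cfP lam A n / cfQ lam A n) Filter.atTop (nhds x)

/-- The value `p_L/q_L` of the finite continued fraction `[a₀; a₁, …, a_L]`. -/
noncomputable def cfValList (lam : ℝ) (a0 : ℤ) (L : List ℤ) : ℝ :=
  cfP lam (fun i => (a0 :: L).getD i 0) L.length /
    cfQ lam (fun i => (a0 :: L).getD i 0) L.length

/-- The last denominator `q_L` of the finite continued fraction `[a₀; a₁, …, a_L]`. -/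
noncomputable def cfDenList (lam : ℝ) (a0 : ℤ) (L : List ℤ) : ℝ :=
  cfQ lam (fun i => (a0 :: L).getD i 0) L.length

/-- The modified floor: `⌊t⌋* = ⌈t⌉ - 1` for `t > 0` and `⌊t⌋* = ⌊t⌋` for `t ≤ 0`. -/
noncomputable def floorstar (t : ℝ) : ℤ := if 0 < t then ⌈t⌉ - 1 else ⌊t⌋

/-- The nearest `λ`-multiple: `⟨y⟩ = ⌊y/λ + 1/2⌋*`. -/
noncomputable def nearestLam (lam : ℝ) (x : ℝ) : ℤ := floorstar (x / lam + 1 / 2)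

/-- The interval map `f_q` on `I_q = [-λ/2, λ/2]`. -/
noncomputable def fq (lam : ℝ) (x : ℝ) : ℝ :=
  if x = 0 then 0 else -1 / x - (nearestLam lam (-1 / x) : ℝ) * lam

/-- `R_q`: equal to `1` for even `q`, and the positive root of `R² + (2-λ_q)R = 1` for odd `q`. -/
noncomputable def Rq (q : ℕ) : ℝ :=
  if Even q then 1 else (lamq q - 2 + Real.sqrt ((2 - lamq q) ^ 2 + 4)) / 2

/-- `r_q = R_q - λ_q`. -/
noncomputable def rq (q : ℕ) : ℝ := Rq q - lamq q

/-- The map `⟨·⟩*` used by the dual algorithm. -/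
noncomputable def nearestDual (lam R y : ℝ) : ℤ :=
  if 0 ≤ y then floorstar (y / lam + 1 - R / lam) else floorstar (y / lam + R / lam)

/-- The dual interval map `f_q^*` on `I_{R_q} = [-R_q, R_q]`. -/
noncomputable def fqstar (lam R : ℝ) (x : ℝ) : ℝ :=
  if x = 0 then 0 else -1 / x - (nearestDual lam R (-1 / x) : ℝ) * lam

/-- The matrix `S = [[0,-1],[1,0]]` as an element of `SL(2,ℝ)`. -/
noncomputable def matS : Matrix.SpecialLinearGroup (Fin 2) ℝ :=
  ⟨!![0, -1; 1, 0], by norm_num [Matrix.det_fin_two_of]⟩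

/-- The matrix `T = [[1,λ],[0,1]]` as an element of `SL(2,ℝ)`. -/
noncomputable def matT (lam : ℝ) : Matrix.SpecialLinearGroup (Fin 2) ℝ :=
  ⟨!![1, lam; 0, 1], by norm_num [Matrix.det_fin_two_of]⟩

/-- The Hecke triangle group `G_q`, the subgroup of `SL(2,ℝ)` generated by `S` and `T_q`. -/
noncomputable def Hecke (q : ℕ) : Subgroup (Matrix.SpecialLinearGroup (Fin 2) ℝ) :=
  Subgroup.closure {matS, matT (lamq q)}

/-- The Möbius action of `g` on `x ∈ ℝ`. -/
noncomputable def moeb (g : Matrix.SpecialLinearGroup (Fin 2) ℝ) (x : ℝ) : ℝ :=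
  (g.val 0 0 * x + g.val 0 1) / (g.val 1 0 * x + g.val 1 1)

/-- `x` and `y` are `G_q`-equivalent. -/
def GqEquiv (q : ℕ) (x y : ℝ) : Prop :=
  ∃ g ∈ Hecke q, (g.val 1 0 * x + g.val 1 1 ≠ 0) ∧ moeb g x = y

/-- Two sequences have a common tail. -/
def CommonTail (a b : ℕ → ℤ) : Prop := ∃ m n : ℕ, ∀ k : ℕ, a (m + k) = b (n + k)

/-- The period block of `ρ_q`: `(3)` for `q = 3`, `((1)^{h_q-1}, 2)` for even `q`
and `((1)^{h_q}, 2, (1)^{h_q-1}, 2)` for odd `q ≥ 5`. -/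
def rhoBlock (q : ℕ) : List ℤ :=
  if q = 3 then [3]
  else if Even q then List.replicate (hQ q - 1) 1 ++ [2]
  else List.replicate (hQ q) 1 ++ 2 :: (List.replicate (hQ q - 1) 1 ++ [2])

/-- The periodic sequence `ρ_q`. -/
def rho (q : ℕ) (i : ℕ) : ℤ := (rhoBlock q).getD (i % (rhoBlock q).length) 0

/-- `x` has the infinite regular `λ_q`-CF with digit sequence `A` (with `A 0 = a₀`). -/
def HasRegCF (q : ℕ) (x : ℝ) (A : ℕ → ℤ) : Prop :=
  (∀ i, A (i + 1) ≠ 0) ∧ RegularSeq q (fun i => A (i + 1)) ∧ CFConvergesTo (lamq q) A x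

/-- `x` has the infinite dual regular `λ_q`-CF with digit sequence `A` (with `A 0 = a₀`). -/
def HasDualRegCF (q : ℕ) (x : ℝ) (A : ℕ → ℤ) : Prop :=
  (∀ i, A (i + 1) ≠ 0) ∧ DualRegularSeq q (fun i => A (i + 1)) ∧ CFConvergesTo (lamq q) A x

/-- The digits of `x` produced by the algorithm for `f_q`: `a_{i+1} = ⟨-1 / f_q^i(x)⟩`. -/
noncomputable def digitSeq (lam : ℝ) (x : ℝ) : ℕ → ℤ :=
  fun i => nearestLam lam (-1 / (fq lam)^[i] x)

/-- The digits of `x` produced by the algorithm for `f_q^*`: `b_{i+1} = ⟨-1 / (f_q^*)^i(x)⟩*`. -/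
noncomputable def digitSeqStar (lam R : ℝ) (x : ℝ) : ℕ → ℤ :=
  fun i => nearestDual lam R (-1 / (fqstar lam R)^[i] x)

open Real

theorem recurrence_eqOn {u v β : ℕ → ℝ} {N : ℕ}
    (hu : ∀ n, n + 2 ≤ N → u (n + 2) = β n * u (n + 1) - u n)
    (hv : ∀ n, n + 2 ≤ N → v (n + 2) = β n * v (n + 1) - v n)
    (h0 : u 0 = v 0) (h1 : u 1 = v 1) : ∀ n ≤ N, u n = v n := by
  intro n
  induction n using Nat.strong_induction_on with
  | _ n ih =>
    match n with
    | 0 => exact fun _ => h0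
    | 1 => exact fun _ => h1
    | n + 2 =>
      intro hn
      rw [hu n hn, hv n hn, ih n (by omega) (by omega), ih (n + 1) (by omega) (by omega)]

theorem cos_odd_mul_add_four (φ x : ℝ) :
    cos (x + 4 * φ) = 2 * cos (2 * φ) * cos (x + 2 * φ) - cos x := by
  have := cos_add_cos (x + 4 * φ) x
  rw [show (x + 4 * φ + x) / 2 = x + 2 * φ by ring, show (x + 4 * φ - x) / 2 = 2 * φ by ring]
    at this
  linarith

theorem mul_cos_eq_cos_odd_mul {u : ℕ → ℝ} {φ : ℝ} {N : ℕ} (hφ : cos φ ≠ 0)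
    (h0 : u 0 = 1) (h1 : u 1 = 2 * cos (2 * φ) - 1)
    (hu : ∀ n, n + 2 ≤ N → u (n + 2) = 2 * cos (2 * φ) * u (n + 1) - u n) :
    ∀ n ≤ N, u n * cos φ = cos ((2 * n + 1) * φ) := by
  have hsol := recurrence_eqOn (v := fun n => cos ((2 * n + 1) * φ) / cos φ) hu
    (fun n _ => by
      push_cast
      rw [mul_div_assoc', div_sub_div_same, div_left_inj' hφ]
      convert cos_odd_mul_add_four φ ((2 * n + 1) * φ) using 2 <;> ring_nf)
    (by simp [h0, hφ])
    (by
      rw [h1, eq_div_iff hφ]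
      push_cast
      rw [show (2 * 1 + 1) * φ = 3 * φ by ring, cos_three_mul, cos_two_mul]
      ring)
  intro n hn
  rw [hsol n hn, div_mul_cancel₀ _ hφ]

theorem eq_pow_div_mul_mod {u : ℕ → ℝ} {h : ℕ} {c : ℝ} (hu : ∀ n, u (n + h) = c * u n)
    (n : ℕ) : u n = c ^ (n / h) * u (n % h) := by
  have hk : ∀ k r, u (r + k * h) = c ^ k * u r := by
    intro k r
    induction k with
    | zero => simp
    | succ k ih => rw [add_one_mul, ← add_assoc, hu, ih, pow_succ']; ring
  conv_lhs => rw [← Nat.mod_add_div' n h]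
  exact hk _ _

theorem pos_of_add_eq_mul {u : ℕ → ℝ} {h : ℕ} {c : ℝ} (hh : 0 < h) (hc : 0 < c)
    (hu : ∀ n, u (n + h) = c * u n) (hpos : ∀ n < h, 0 < u n) (n : ℕ) : 0 < u n := by
  rw [eq_pow_div_mul_mod hu n]
  exact mul_pos (pow_pos hc _) (hpos _ (Nat.mod_lt n hh))

theorem tendsto_zero_of_add_eq_mul {u : ℕ → ℝ} {h : ℕ} {c : ℝ} (hh : 0 < h) (hc0 : 0 ≤ c)
    (hc1 : c < 1) (hu : ∀ n, u (n + h) = c * u n) : Tendsto u atTop (𝓝 0) := by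
  set M := ∑ j ∈ Finset.range h, |u j|
  have hbound : ∀ n, ‖u n‖ ≤ c ^ (n / h) * M := by
    intro n
    rw [eq_pow_div_mul_mod hu n, norm_mul, norm_pow, Real.norm_of_nonneg hc0]
    refine mul_le_mul_of_nonneg_left ?_ (pow_nonneg hc0 _)
    exact Finset.single_le_sum (f := fun j => |u j|) (fun _ _ => abs_nonneg _)
      (Finset.mem_range.2 (Nat.mod_lt n hh))
  refine squeeze_zero_norm hbound ?_
  simpa using ((tendsto_pow_atTop_nhds_zero_of_lt_one hc0 hc1).comp
    (Nat.tendsto_div_const_atTop hh.ne')).mul_const M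

/-- `cfErr lam A x (n + 1) = p_n - x q_n`; the shift makes room for `p_{-1} - x q_{-1} = 1`. -/
noncomputable def cfErr (lam : ℝ) (A : ℕ → ℤ) (x : ℝ) : ℕ → ℝ
  | 0 => 1
  | n + 1 => cfP lam A n - x * cfQ lam A n

section CFErr

variable {lam x : ℝ} {A : ℕ → ℤ}

theorem cfErr_add_two (n : ℕ) :
    cfErr lam A x (n + 2) = A (n + 1) * lam * cfErr lam A x (n + 1) - cfErr lam A x n := by
  cases n <;> simp only [cfErr, cfP, cfQ] <;> ring

theorem cfP_succ_mul_cfQ_sub (n : ℕ) :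
    cfP lam A (n + 1) * cfQ lam A n - cfP lam A n * cfQ lam A (n + 1) = -1 := by
  induction n with
  | zero => simp only [cfP, cfQ]; ring
  | succ n ih => simp only [cfP, cfQ] at ih ⊢; linear_combination ih

theorem cfErr_mul_cfQ_succ (n : ℕ) :
    cfErr lam A x (n + 1) * cfQ lam A (n + 1) = cfErr lam A x (n + 2) * cfQ lam A n + 1 := by
  simp only [cfErr]
  linear_combination -(cfP_succ_mul_cfQ_sub (lam := lam) (A := A) n)

theorem cfQ_pos_of_cfErr_pos (hpos : ∀ n, 0 < cfErr lam A x n) (n : ℕ) : 0 < cfQ lam A n := by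
  induction n with
  | zero => simp [cfQ]
  | succ n ih =>
    have hprod : 0 < cfErr lam A x (n + 1) * cfQ lam A (n + 1) := by
      rw [cfErr_mul_cfQ_succ]
      nlinarith [hpos (n + 2)]
    exact pos_of_mul_pos_right hprod (hpos (n + 1)).le

theorem one_le_cfErr_mul_cfQ (hpos : ∀ n, 0 < cfErr lam A x n) (n : ℕ) :
    1 ≤ cfErr lam A x n * cfQ lam A n := by
  cases n with
  | zero => simp [cfErr, cfQ]
  | succ n =>
    rw [cfErr_mul_cfQ_succ]
    nlinarith [hpos (n + 2), cfQ_pos_of_cfErr_pos hpos n]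

/-- Since `p_n / q_n - x = cfErr (n + 1) / q_n` and `1 / q_n ≤ cfErr n`, positive errors tending
to zero force convergence. -/
theorem cfConvergesTo_of_cfErr (hpos : ∀ n, 0 < cfErr lam A x n)
    (hlim : Tendsto (cfErr lam A x) atTop (𝓝 0)) : CFConvergesTo lam A x := by
  have hQ := cfQ_pos_of_cfErr_pos hpos
  refine ⟨fun n => (hQ n).ne', ?_⟩
  have hdiff : ∀ n, cfP lam A n / cfQ lam A n = x + cfErr lam A x (n + 1) / cfQ lam A n := by
    intro n
    simp only [cfErr]
    field_simp [(hQ n).ne']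
    ring
  have hbound : ∀ n, cfErr lam A x (n + 1) / cfQ lam A n ≤
      cfErr lam A x (n + 1) * cfErr lam A x n := by
    intro n
    rw [div_le_iff₀ (hQ n), mul_assoc]
    exact le_mul_of_one_le_right (hpos _).le (one_le_cfErr_mul_cfQ hpos n)
  have hsmall : Tendsto (fun n => cfErr lam A x (n + 1) / cfQ lam A n) atTop (𝓝 0) := by
    refine squeeze_zero (fun n => div_nonneg (hpos _).le (hQ n).le) hbound ?_
    simpa using (hlim.comp (tendsto_add_atTop_nat 1)).mul hlim
  simpa [hdiff] using hsmall.const_add x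

end CFErr

def onesThenTwo (h n : ℕ) : ℤ := if n % h = h - 1 then 2 else 1

section OnesThenTwo

variable {h : ℕ}

theorem onesThenTwo_ne_zero (n : ℕ) : onesThenTwo h n ≠ 0 := by
  unfold onesThenTwo; split_ifs <;> norm_num

theorem onesThenTwo_add_period (n : ℕ) : onesThenTwo h (n + h) = onesThenTwo h n := by
  simp [onesThenTwo]

theorem onesThenTwo_of_succ_lt {n : ℕ} (hn : n + 1 < h) : onesThenTwo h n = 1 := by
  rw [onesThenTwo, Nat.mod_eq_of_lt (by omega), if_neg (by omega)]

theorem onesThenTwo_pred (hh : 0 < h) : onesThenTwo h (h - 1) = 2 := by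
  rw [onesThenTwo, Nat.mod_eq_of_lt (by omega), if_pos rfl]

theorem exists_onesThenTwo_eq_two (hh : 0 < h) (l : ℕ) : ∃ j < h, onesThenTwo h (l + j) = 2 := by
  refine ⟨h - 1 - l % h, by omega, ?_⟩
  have hl := Nat.mod_lt l hh
  rw [onesThenTwo, if_pos]
  rw [show l + (h - 1 - l % h) = (h - 1) + h * (l / h) by
    have := Nat.div_add_mod l h; omega, Nat.add_mul_mod_self_left, Nat.mod_eq_of_lt (by omega)]

end OnesThenTwo

section ConvergesToOne

variable {h : ℕ} {A : ℕ → ℤ} {φ : ℝ}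

theorem cos_odd_mul_pos_of_le (hφ : (4 * h + 4) * φ = π) {n : ℕ} (hn : n ≤ h) :
    0 < cos ((2 * n + 1) * φ) := by
  have hφpos : 0 < φ := by nlinarith [pi_pos]
  have hnh : (n : ℝ) ≤ h := by exact_mod_cast hn
  apply cos_pos_of_mem_Ioo
  constructor <;> nlinarith [pi_pos]

theorem cfErr_mul_cos_of_le (hA0 : A 0 = 1) (hA : ∀ n, A (n + 1) = onesThenTwo h n)
    (hφ : (4 * h + 4) * φ = π) {n : ℕ} (hn : n ≤ h) :
    cfErr (2 * cos (2 * φ)) A 1 n * cos φ = cos ((2 * n + 1) * φ) := by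
  refine mul_cos_eq_cos_odd_mul (u := cfErr (2 * cos (2 * φ)) A 1)
    (by simpa using (cos_odd_mul_pos_of_le hφ (Nat.zero_le h)).ne') rfl
    (by simp [cfErr, cfP, cfQ, hA0]) (fun m hm => ?_) n hn
  rw [cfErr_add_two, hA, onesThenTwo_of_succ_lt (by omega)]
  push_cast; ring

theorem cfErr_period_eq_tan (hA0 : A 0 = 1) (hA : ∀ n, A (n + 1) = onesThenTwo h n)
    (hφ : (4 * h + 4) * φ = π) :
    cfErr (2 * cos (2 * φ)) A 1 h = tan φ := by
  have hcos : cos φ ≠ 0 := by simpa using (cos_odd_mul_pos_of_le hφ (Nat.zero_le h)).ne'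
  have hform := cfErr_mul_cos_of_le hA0 hA hφ le_rfl
  rw [show (2 * (h : ℝ) + 1) * φ = π / 2 - φ by linarith, cos_pi_div_two_sub] at hform
  rw [tan_eq_sin_div_cos, eq_div_iff hcos, hform]

/-- With `e = cfErr` and `λ = 2 cos 2φ`, the closing digit `2` gives
`e (h + 1) = (λ e h - e (h - 1)) + λ e h`, where the bracket continues the Chebyshev solution
to `cos ((2h+3)φ) / cos φ = -tan φ`; hence `e (h + 1) = (λ - 1) tan φ = tan φ · e 1`. -/
theorem cfErr_period_succ (hA0 : A 0 = 1) (hA : ∀ n, A (n + 1) = onesThenTwo h n)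
    (hh : 0 < h) (hφ : (4 * h + 4) * φ = π) :
    cfErr (2 * cos (2 * φ)) A 1 (h + 1) = tan φ * cfErr (2 * cos (2 * φ)) A 1 1 := by
  obtain ⟨k, rfl⟩ : ∃ k, h = k + 1 := ⟨h - 1, by omega⟩
  have hcos : cos φ ≠ 0 := by simpa using (cos_odd_mul_pos_of_le hφ (Nat.zero_le _)).ne'
  have hprev := cfErr_mul_cos_of_le hA0 hA hφ (Nat.le_succ k)
  have hlast := cfErr_period_eq_tan hA0 hA hφ
  have hcheb := cos_odd_mul_add_four φ ((2 * k + 1) * φ)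
  push_cast at hφ
  rw [show (2 * k + 1) * φ + 4 * φ = π / 2 + φ by linarith,
    show (2 * k + 1) * φ + 2 * φ = π / 2 - φ by linarith, cos_pi_div_two_sub,
    cos_add, cos_pi_div_two, sin_pi_div_two] at hcheb
  have h1 : cfErr (2 * cos (2 * φ)) A 1 1 = 2 * cos (2 * φ) - 1 := by
    simp [cfErr, cfP, cfQ, hA0]
  rw [cfErr_add_two, hA, show onesThenTwo (k + 1) k = 2 from onesThenTwo_pred k.succ_pos,
    hlast, h1, tan_eq_sin_div_cos]
  rw [tan_eq_sin_div_cos] at hlast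
  field_simp
  linear_combination -hprev - hcheb

theorem cfErr_add_period (hA0 : A 0 = 1) (hA : ∀ n, A (n + 1) = onesThenTwo h n)
    (hh : 0 < h) (hφ : (4 * h + 4) * φ = π) (n : ℕ) :
    cfErr (2 * cos (2 * φ)) A 1 (n + h) = tan φ * cfErr (2 * cos (2 * φ)) A 1 n := by
  refine recurrence_eqOn (u := fun m => cfErr (2 * cos (2 * φ)) A 1 (m + h))
    (v := fun m => tan φ * cfErr (2 * cos (2 * φ)) A 1 m)
    (β := fun m => A (m + 1) * (2 * cos (2 * φ))) (N := n)
    (fun m _ => ?_) (fun m _ => ?_) ?_ ?_ n le_rfl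
  · simp only [show m + 2 + h = m + h + 2 by ring, show m + 1 + h = m + h + 1 by ring,
      cfErr_add_two (m + h), hA, onesThenTwo_add_period]
  · rw [cfErr_add_two]; ring
  · show cfErr _ A 1 (0 + h) = tan φ * cfErr _ A 1 0
    rw [zero_add, cfErr_period_eq_tan hA0 hA hφ, cfErr, mul_one]
  · rw [add_comm, cfErr_period_succ hA0 hA hh hφ]

theorem cfConvergesTo_one_of_onesThenTwo (hA0 : A 0 = 1)
    (hA : ∀ n, A (n + 1) = onesThenTwo h n) (hh : 0 < h) :
    CFConvergesTo (lamq (2 * h + 2)) A 1 := by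
  set φ := π / (4 * h + 4) with hφdef
  have hφ : (4 * h + 4) * φ = π := by rw [hφdef]; field_simp
  have hlam : lamq (2 * h + 2) = 2 * cos (2 * φ) := by
    rw [lamq, hφdef]; push_cast; congr 2; field_simp; ring
  have hφpos : 0 < φ := by positivity
  have hφlt : φ < π / 4 := by
    have : (1 : ℝ) ≤ h := by exact_mod_cast hh
    rw [hφdef, div_lt_div_iff₀ (by positivity) (by norm_num)]
    nlinarith [pi_pos]
  have htan0 : 0 < tan φ := tan_pos_of_pos_of_lt_pi_div_two hφpos (by linarith)
  have htan1 : tan φ < 1 := by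
    rw [← tan_pi_div_four]
    exact tan_lt_tan_of_lt_of_lt_pi_div_two (by linarith) (by linarith [pi_pos]) hφlt
  have hcos : 0 < cos φ := by simpa using cos_odd_mul_pos_of_le hφ (Nat.zero_le h)
  have hperiod := cfErr_add_period hA0 hA hh hφ
  have hpos : ∀ n < h, 0 < cfErr (2 * cos (2 * φ)) A 1 n := fun n hn =>
    pos_of_mul_pos_left ((cfErr_mul_cos_of_le hA0 hA hφ hn.le).symm ▸
      cos_odd_mul_pos_of_le hφ hn.le) hcos.le
  rw [hlam]
  exact cfConvergesTo_of_cfErr (pos_of_add_eq_mul hh htan0 hperiod hpos)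
    (tendsto_zero_of_add_eq_mul hh htan0.le htan1 hperiod)

end ConvergesToOne

theorem regularSeq_of_even {q : ℕ} {a : ℕ → ℤ} (hqe : Even q)
    (ha : ∀ l, ∃ j < hQ q, a (l + j) ≠ 1 ∧ a (l + j) ≠ -1) : RegularSeq q a := by
  rintro l len ⟨ε, hε, hblock⟩
  obtain ⟨T, hT⟩ : ∃ T, List.ofFn (fun j : Fin len => a (l + j)) =
      List.replicate (hQ q) ε ++ T := by
    rw [if_pos hqe] at hblock
    rcases hblock with hblock | ⟨m, -, hblock⟩
    · exact ⟨[ε], by rw [hblock, List.replicate_succ']⟩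
    · exact ⟨[ε * m], hblock⟩
  obtain ⟨j, hj, hne1, hne2⟩ := ha l
  have hentry := congrArg (·[j]?) hT
  simp only [List.getElem?_append_left (l₁ := List.replicate (hQ q) ε) (by simpa using hj),
    List.getElem?_replicate, if_pos hj, List.getElem?_ofFn] at hentry
  have hεj : a (l + j) = ε := by
    split_ifs at hentry
    simpa using hentry
  rcases hε with rfl | rfl
  exacts [hne1 hεj, hne2 hεj]

theorem two_mul_hQ_add_two {q : ℕ} (hqe : Even q) (hq : 2 ≤ q) : 2 * hQ q + 2 = q := by
  rw [hQ, if_pos hqe]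
  have := Nat.even_iff.mp hqe
  omega

theorem rho_eq_onesThenTwo {q : ℕ} (hq : 4 ≤ q) (hqe : Even q) : rho q = onesThenTwo (hQ q) := by
  have hh := two_mul_hQ_add_two hqe (by omega)
  have hblock : rhoBlock q = List.replicate (hQ q - 1) 1 ++ [2] := by
    rw [rhoBlock, if_neg (by omega), if_pos hqe]
  have hlen : (rhoBlock q).length = hQ q := by simp [hblock]; omega
  funext i
  have hi := Nat.mod_lt i (show 0 < hQ q by omega)
  rw [rho, hlen, onesThenTwo, hblock]
  split_ifs with hlast
  · rw [hlast, List.getD_append_right _ _ _ _ (by simp)]; simp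
  · rw [List.getD_append _ _ _ _ (by simp; omega), List.getD_eq_getElem _ _ (by simp; omega)]
    simp

/-- For even `q ≥ 4` the infinite `λ_q`-CF `[1; ov((1)^{h_q-1}, 2)]` is regular and
converges to `1`. -/
theorem stmt9 (q : ℕ) (hq : 4 ≤ q) (hqe : Even q) (A : ℕ → ℤ)
    (hA : A = fun n => if n = 0 then 1 else rho q (n - 1)) :
    (∀ i, A (i + 1) ≠ 0) ∧ RegularSeq q (fun i => A (i + 1)) ∧
      CFConvergesTo (lamq q) A 1 := by
  have hh : 0 < hQ q := by have := two_mul_hQ_add_two hqe (by omega); omega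
  have hdigits : (fun i => A (i + 1)) = onesThenTwo (hQ q) := by
    rw [← rho_eq_onesThenTwo hq hqe, hA]; rfl
  have hdigit : ∀ i, A (i + 1) = onesThenTwo (hQ q) i := congrFun hdigits
  refine ⟨fun i => hdigit i ▸ onesThenTwo_ne_zero i, ?_, ?_⟩
  · rw [hdigits]
    refine regularSeq_of_even hqe fun l => ?_
    obtain ⟨j, hj, htwo⟩ := exists_onesThenTwo_eq_two hh l
    exact ⟨j, hj, by rw [htwo]; decide, by rw [htwo]; decide⟩
  · rw [← congrArg lamq (two_mul_hQ_add_two hqe (by omega))]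
    exact cfConvergesTo_one_of_onesThenTwo (by simp [hA]) hdigit hh
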